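/- Let A be an infinite dimensional simple separable unital C*-algebra and let α : G → Aut(A) be an action of a finite group G with the tracial Rokhlin property. Then for every finite F ⊆ A, every ε > 0, and every positive x ∈ A with ‖x‖ = 1, there are mutually orthogonal projections e_g ∈ A (g ∈ G) such that: ‖α_g(e_h) − e_{gh}‖ < ε for all g,h; ‖e_g a − a e_g‖ < ε for g ∈ G, a ∈ F; the projection e = Σ_g e_g is α-invariant (α_g(e) = e for all g); 1 − e is Murray-von Neumann equivalent to a projection in the hereditary subalgebra generated by x; and ‖e x e‖ > 1 − ε. -/

import Mathlib

open Matrix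
open scoped ComplexOrder

noncomputable section

/-- A projection in a `*`-algebra: a selfadjoint idempotent. -/
def IsProjectionElem {A : Type*} [Mul A] [Star A] (p : A) : Prop :=
  star p = p ∧ p * p = p

/-- Murray-von Neumann equivalence of projections. -/
def MvNEquiv {A : Type*} [Mul A] [Star A] (p q : A) : Prop :=
  ∃ v : A, star v * v = p ∧ v * star v = q

/-- `p` is Murray-von Neumann equivalent to a subprojection of `q`. -/
def MvNSubEquiv {A : Type*} [Mul A] [Star A] (p q : A) : Prop :=
  ∃ v : A, star v * v = p ∧ q * (v * star v) = v * star v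

/-- The hereditary subalgebra generated by `x`: the closure of `x A x`. -/
def herSub {A : Type*} [Mul A] [TopologicalSpace A] (x : A) : Set A :=
  closure {y : A | ∃ a : A, y = x * a * x}

/-- `p` is Murray-von Neumann equivalent to a projection in the hereditary
subalgebra generated by `x`. -/
def MvNInHer {A : Type*} [Mul A] [Star A] [TopologicalSpace A] (p x : A) : Prop :=
  ∃ q : A, IsProjectionElem q ∧ q ∈ herSub x ∧ MvNEquiv p q

/-- Simplicity of a C*-algebra: it is nonzero and has no nontrivial closed
two-sided ideals. -/
def IsSimpleCStarAlgebra (A : Type*) [NonUnitalNonAssocRing A] [TopologicalSpace A] : Prop :=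
  (∃ a : A, a ≠ 0) ∧
    ∀ I : TwoSidedIdeal A, IsClosed (I : Set A) → (I : Set A) = {0} ∨ (I : Set A) = Set.univ

section Rokhlin

variable {G : Type*} [Group G] [Fintype G] {A : Type*} [CStarAlgebra A]
  [PartialOrder A] [StarOrderedRing A]

/-- The tracial Rokhlin property for an action of a finite group `G`. -/
def TracialRokhlin (α : G → A ≃⋆ₐ[ℂ] A) : Prop :=
  ∀ (F : Finset A) (ε : ℝ), 0 < ε → ∀ x : A, 0 ≤ x → ‖x‖ = 1 →
    ∃ e : G → A, (∀ g, IsProjectionElem (e g)) ∧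
      (∀ g h, g ≠ h → e g * e h = 0) ∧
      (∀ g h, ‖α g (e h) - e (g * h)‖ < ε) ∧
      (∀ g, ∀ a ∈ F, ‖e g * a - a * e g‖ < ε) ∧
      MvNInHer (1 - ∑ g : G, e g) x ∧
      1 - ε < ‖(∑ g : G, e g) * x * (∑ g : G, e g)‖

/-- The strict Rokhlin property for an action of a finite group `G`. -/
def StrictRokhlin (α : G → A ≃⋆ₐ[ℂ] A) : Prop :=
  ∀ (F : Finset A) (ε : ℝ), 0 < ε →
    ∃ e : G → A, (∀ g, IsProjectionElem (e g)) ∧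
      (∀ g h, g ≠ h → e g * e h = 0) ∧
      (∀ g h, ‖α g (e h) - e (g * h)‖ < ε) ∧
      (∀ g, ∀ a ∈ F, ‖e g * a - a * e g‖ < ε) ∧
      (∑ g : G, e g) = 1

end Rokhlin

/-!
Let `p = ∑ g, e g` be the sum of a Rokhlin tower with tolerance `δ`, so `‖α g p - p‖ ≤ |G| δ`.
The average of the translates `α g p` is exactly invariant and within `|G| δ` of `p`, hence almost
idempotent; a continuous cutoff of it (functional calculus commutes with the automorphisms) is an
invariant projection `E` near `p`. Close projections are conjugate by a unitary `w` near `1`, the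
unitary part of `E p + (1 - E) (1 - p)`. Conjugating the tower by `w` moves its sum onto `E`,
transports the Murray-von Neumann equivalence of `1 - p`, and perturbs each Rokhlin estimate by
`O(‖w - 1‖)`.
-/

theorem isProjectionElem_iff_isStarProjection {A : Type*} [Mul A] [Star A] {p : A} :
    IsProjectionElem p ↔ IsStarProjection p := by
  rw [isStarProjection_iff']
  exact and_comm

theorem IsStarProjection.sum {ι R : Type*} [NonUnitalNonAssocSemiring R] [StarRing R]
    {s : Finset ι} {e : ι → R} (he : ∀ i ∈ s, IsStarProjection (e i))
    (horth : ∀ i ∈ s, ∀ j ∈ s, i ≠ j → e i * e j = 0) :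
    IsStarProjection (∑ i ∈ s, e i) := by
  classical
  induction s using Finset.induction_on with
  | empty => simp
  | insert i s hi ih =>
    have hs : ∀ j ∈ s, j ∈ insert i s := fun j => Finset.mem_insert_of_mem
    rw [Finset.sum_insert hi]
    refine (he i (s.mem_insert_self i)).add
      (ih (fun j hj => he j (hs j hj)) fun j hj k hk => horth j (hs j hj) k (hs k hk)) ?_
    rw [Finset.mul_sum]
    exact Finset.sum_eq_zero fun j hj =>
      horth i (s.mem_insert_self i) j (hs j hj) (ne_of_mem_of_not_mem hj hi).symm

theorem MvNInHer.unitary_conj {A : Type*} [Monoid A] [StarMul A] [TopologicalSpace A]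
    {p x w : A} (h : MvNInHer p x) (hw : w ∈ unitary A) : MvNInHer (w * p * star w) x := by
  obtain ⟨q, hq, hqx, v, hvp, hvq⟩ := h
  refine ⟨q, hq, hqx, v * star w, ?_, ?_⟩
  · rw [star_mul, star_star, mul_assoc, ← mul_assoc (star v), hvp, mul_assoc]
  · rw [star_mul, star_star, mul_assoc, ← mul_assoc (star w), Unitary.star_mul_self_of_mem hw,
      one_mul, hvq]

section Perturbation

variable {R : Type*} [NonUnitalSeminormedRing R]

theorem norm_mul_sub_mul_le_add (f e a : R) :
    ‖f * a - a * f‖ ≤ ‖e * a - a * e‖ + 2 * ‖f - e‖ * ‖a‖ := by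
  calc ‖f * a - a * f‖ = ‖(e * a - a * e) + ((f - e) * a - a * (f - e))‖ := by
        congr 1; noncomm_ring
    _ ≤ ‖e * a - a * e‖ + (‖f - e‖ * ‖a‖ + ‖a‖ * ‖f - e‖) :=
        (norm_add_le _ _).trans (add_le_add_right
          ((norm_sub_le _ _).trans (add_le_add (norm_mul_le _ _) (norm_mul_le _ _))) _)
    _ = ‖e * a - a * e‖ + 2 * ‖f - e‖ * ‖a‖ := by ring

theorem norm_mul_mul_sub_mul_mul_le {f e : R} (hf : ‖f‖ ≤ 1) (he : ‖e‖ ≤ 1) (x : R) :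
    ‖f * x * f - e * x * e‖ ≤ 2 * ‖f - e‖ * ‖x‖ := by
  calc ‖f * x * f - e * x * e‖ = ‖(f - e) * x * f + e * x * (f - e)‖ := by
        congr 1; noncomm_ring
    _ ≤ ‖f - e‖ * ‖x‖ * ‖f‖ + ‖e‖ * ‖x‖ * ‖f - e‖ :=
        (norm_add_le _ _).trans (add_le_add norm_mul₃_le norm_mul₃_le)
    _ ≤ ‖f - e‖ * ‖x‖ * 1 + 1 * ‖x‖ * ‖f - e‖ := by gcongr
    _ = 2 * ‖f - e‖ * ‖x‖ := by ring

end Perturbation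

theorem norm_map_sum_sub_sum_le {G : Type*} [Group G] [Fintype G] {M : Type*}
    [SeminormedAddCommGroup M] {F : Type*} [FunLike F M M] [AddMonoidHomClass F M M] (φ : F)
    (g : G) {e : G → M} {δ : ℝ} (h : ∀ k, ‖φ (e k) - e (g * k)‖ ≤ δ) :
    ‖φ (∑ k, e k) - ∑ k, e k‖ ≤ Fintype.card G * δ := by
  rw [map_sum, ← Fintype.sum_equiv (Equiv.mulLeft g) (fun k => e (g * k)) e (fun _ => rfl),
    ← Finset.sum_sub_distrib]
  refine (norm_sum_le _ _).trans ?_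
  simpa using Finset.sum_le_sum fun k (_ : k ∈ Finset.univ) => h k

theorem StarAlgEquiv.norm_map_sub_le_add {A B : Type*} [NonUnitalCStarAlgebra A]
    [NonUnitalCStarAlgebra B] (φ : A ≃⋆ₐ[ℂ] B) (a c : A) (b d : B) :
    ‖φ a - b‖ ≤ ‖a - c‖ + ‖φ c - d‖ + ‖b - d‖ := by
  calc ‖φ a - b‖ = ‖φ (a - c) + (φ c - d) - (b - d)‖ := by rw [map_sub]; congr 1; abel
    _ ≤ ‖a - c‖ + ‖φ c - d‖ + ‖b - d‖ := by
        rw [← StarAlgEquiv.norm_map φ (a - c)]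
        exact (norm_sub_le _ _).trans (add_le_add_left (norm_add_le _ _) _)

section CStarAlgebra

variable {A : Type*} [CStarAlgebra A]

theorem norm_mul_mul_star_sub_le {u : A} (hu : u ∈ unitary A) (q : A) :
    ‖u * q * star u - q‖ ≤ 2 * ‖u - 1‖ * ‖q‖ := by
  have hsu : ‖star u - 1‖ = ‖u - 1‖ := by rw [← norm_star (u - 1), star_sub, star_one]
  calc ‖u * q * star u - q‖ = ‖(u - 1) * q * star u + q * (star u - 1)‖ := by
        congr 1; noncomm_ring
    _ ≤ ‖u - 1‖ * ‖q‖ + ‖q‖ * ‖u - 1‖ := by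
        refine (norm_add_le _ _).trans (add_le_add ?_ ((norm_mul_le _ _).trans_eq (by rw [hsu])))
        rw [CStarRing.norm_mul_mem_unitary _ (Unitary.star_mem hu)]
        exact norm_mul_le _ _
    _ = 2 * ‖u - 1‖ * ‖q‖ := by ring

theorem abs_mul_self_sub_self_le_of_mem_spectrum {a : A} (ha : IsSelfAdjoint a) {t : ℝ}
    (ht : t ∈ spectrum ℝ a) : |t * t - t| ≤ ‖a * a - a‖ := by
  have h := norm_apply_le_norm_cfc (fun t : ℝ => t * t - t) a ht
  rwa [cfc_sub .., cfc_mul .., cfc_id' ℝ a] at h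

theorem abs_sub_one_le_of_mem_spectrum {a : A} (ha : IsSelfAdjoint a) {t : ℝ}
    (ht : t ∈ spectrum ℝ a) : |t - 1| ≤ ‖a - 1‖ := by
  have h := norm_apply_le_norm_cfc (fun t : ℝ => t - 1) a ht
  rwa [cfc_sub .., cfc_id' ℝ a, cfc_const_one ℝ a] at h

def projCutoff (t : ℝ) : ℝ := min 1 (max 0 (2 * t - 1 / 2))

theorem continuous_projCutoff : Continuous projCutoff := by
  unfold projCutoff
  fun_prop

theorem projCutoff_mul_self_and_abs_sub_le {t η : ℝ} (hη : η ≤ 1 / 16) (h : |t * t - t| ≤ η) :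
    projCutoff t * projCutoff t = projCutoff t ∧ |projCutoff t - t| ≤ 2 * η := by
  rw [abs_le] at h
  rcases le_or_gt t (1 / 4) with ht | ht
  · have hf : projCutoff t = 0 := by simp only [projCutoff]; grind
    rw [hf, abs_le]
    refine ⟨by ring, ?_, ?_⟩ <;> nlinarith
  · have hf : projCutoff t = 1 := by
      have : 3 / 4 ≤ t := by nlinarith
      simp only [projCutoff]; grind
    rw [hf, abs_le]
    refine ⟨by ring, ?_, ?_⟩ <;> nlinarith

theorem IsSelfAdjoint.isStarProjection_cfc_projCutoff {a : A} (ha : IsSelfAdjoint a)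
    (h : ‖a * a - a‖ ≤ 1 / 16) : IsStarProjection (cfc projCutoff a) := by
  refine ⟨?_, cfc_predicate projCutoff a⟩
  rw [IsIdempotentElem, ← cfc_mul projCutoff projCutoff a
    continuous_projCutoff.continuousOn continuous_projCutoff.continuousOn]
  exact cfc_congr fun t ht =>
    (projCutoff_mul_self_and_abs_sub_le h (abs_mul_self_sub_self_le_of_mem_spectrum ha ht)).1

theorem IsSelfAdjoint.norm_cfc_projCutoff_sub_le {a : A} (ha : IsSelfAdjoint a)
    (h : ‖a * a - a‖ ≤ 1 / 16) : ‖cfc projCutoff a - a‖ ≤ 2 * ‖a * a - a‖ := by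
  nth_rewrite 2 [← cfc_id' ℝ a]
  rw [← cfc_sub projCutoff (fun t => t) a continuous_projCutoff.continuousOn]
  exact norm_cfc_le (by positivity) fun t ht =>
    (projCutoff_mul_self_and_abs_sub_le h (abs_mul_self_sub_self_le_of_mem_spectrum ha ht)).2

theorem norm_mul_self_sub_self_le {a p : A} (hp : IsStarProjection p) {δ : ℝ} (hδ : δ ≤ 1)
    (h : ‖a - p‖ ≤ δ) : ‖a * a - a‖ ≤ 4 * δ := by
  have ha : ‖a‖ ≤ 1 + δ := by
    calc ‖a‖ = ‖(a - p) + p‖ := by rw [sub_add_cancel]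
      _ ≤ δ + 1 := (norm_add_le _ _).trans (add_le_add h hp.norm_le)
      _ = 1 + δ := add_comm _ _
  have key : a * a - a = a * (a - p) + (a - p) * p - (a - p) := by
    rw [mul_sub, sub_mul, hp.isIdempotentElem.eq]; abel
  have h0 : 0 ≤ δ := (norm_nonneg _).trans h
  calc ‖a * a - a‖ ≤ ‖a * (a - p)‖ + ‖(a - p) * p‖ + ‖a - p‖ := by
        rw [key]
        exact (norm_sub_le _ _).trans (by gcongr; exact norm_add_le _ _)
    _ ≤ ‖a‖ * ‖a - p‖ + ‖a - p‖ * ‖p‖ + ‖a - p‖ := by gcongr <;> exact norm_mul_le _ _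
    _ ≤ (1 + δ) * δ + δ * 1 + δ := by gcongr; exact hp.norm_le
    _ ≤ 4 * δ := by nlinarith

theorem abs_inv_sqrt_sub_one_le {t : ℝ} (ht : 1 / 2 ≤ t) : |(√t)⁻¹ - 1| ≤ |t - 1| := by
  have hu0 : 0 < √t := Real.sqrt_pos.2 (by linarith)
  have hut : √t * √t = t := Real.mul_self_sqrt (by linarith)
  have hu : 7 / 10 ≤ √t := by nlinarith
  have e1 : (√t)⁻¹ - 1 = (1 - √t) / √t := by field_simp
  have e2 : t - 1 = (√t - 1) * (√t + 1) := by linear_combination -hut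
  rw [e1, e2, abs_div, abs_of_pos hu0, div_le_iff₀ hu0, abs_mul, abs_sub_comm,
    abs_of_pos (by linarith : 0 < √t + 1)]
  nlinarith [abs_nonneg (√t - 1)]

theorem one_half_le_of_mem_spectrum {b : A} (hb : IsSelfAdjoint b) (hb1 : ‖b - 1‖ ≤ 1 / 2)
    {t : ℝ} (ht : t ∈ spectrum ℝ b) : 1 / 2 ≤ t := by
  linarith [abs_le.1 ((abs_sub_one_le_of_mem_spectrum hb ht).trans hb1)]

theorem continuousOn_inv_sqrt_spectrum {b : A} (hb : IsSelfAdjoint b) (hb1 : ‖b - 1‖ ≤ 1 / 2) :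
    ContinuousOn (fun t : ℝ => (√t)⁻¹) (spectrum ℝ b) :=
  Real.continuous_sqrt.continuousOn.inv₀ fun t ht =>
    (Real.sqrt_pos.2 (by linarith [one_half_le_of_mem_spectrum hb hb1 ht])).ne'

theorem cfc_inv_sqrt_mul_mul_self {b : A} (hb : IsSelfAdjoint b) (hb1 : ‖b - 1‖ ≤ 1 / 2) :
    cfc (fun t : ℝ => (√t)⁻¹) b * b * cfc (fun t : ℝ => (√t)⁻¹) b = 1 := by
  have hg := continuousOn_inv_sqrt_spectrum hb hb1
  calc _ = cfc (fun t : ℝ => (√t)⁻¹ * t * (√t)⁻¹) b := by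
        rw [cfc_mul (fun t : ℝ => (√t)⁻¹ * t) _ b (hg.mul continuousOn_id) hg,
          cfc_mul _ (fun t : ℝ => t) b hg continuousOn_id, cfc_id' ℝ b]
    _ = 1 := by
        rw [← cfc_const_one ℝ b]
        refine cfc_congr fun t ht => ?_
        have ht' := one_half_le_of_mem_spectrum hb hb1 ht
        have := Real.mul_self_sqrt (by linarith : 0 ≤ t)
        field_simp [(Real.sqrt_pos.2 (by linarith : 0 < t)).ne']
        linarith

theorem isUnit_cfc_inv_sqrt {b : A} (hb : IsSelfAdjoint b) (hb1 : ‖b - 1‖ ≤ 1 / 2) :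
    IsUnit (cfc (fun t : ℝ => (√t)⁻¹) b) :=
  (isUnit_cfc_iff _ b (continuousOn_inv_sqrt_spectrum hb hb1)).2 fun t ht =>
    inv_ne_zero (Real.sqrt_pos.2 (by linarith [one_half_le_of_mem_spectrum hb hb1 ht])).ne'

theorem norm_cfc_inv_sqrt_sub_one_le {b : A} (hb : IsSelfAdjoint b) (hb1 : ‖b - 1‖ ≤ 1 / 2) :
    ‖cfc (fun t : ℝ => (√t)⁻¹) b - 1‖ ≤ ‖b - 1‖ := by
  have h := norm_cfc_le (a := b) (f := fun t : ℝ => (√t)⁻¹ - 1) (norm_nonneg (b - 1))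
    fun t ht => (abs_inv_sqrt_sub_one_le (one_half_le_of_mem_spectrum hb hb1 ht)).trans
      (abs_sub_one_le_of_mem_spectrum hb ht)
  rwa [cfc_sub _ _ b (continuousOn_inv_sqrt_spectrum hb hb1) continuousOn_const,
    cfc_const_one ℝ b] at h

theorem norm_star_mul_self_sub_one_le {v : A} (hv : ‖v - 1‖ ≤ 1) :
    ‖star v * v - 1‖ ≤ 3 * ‖v - 1‖ := by
  have hsv : ‖star v - 1‖ = ‖v - 1‖ := by rw [← norm_star (v - 1), star_sub, star_one]
  calc ‖star v * v - 1‖ = ‖(star v - 1) * (v - 1) + (star v - 1) + (v - 1)‖ := by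
        congr 1; noncomm_ring
    _ ≤ ‖v - 1‖ * ‖v - 1‖ + ‖v - 1‖ + ‖v - 1‖ := by
        refine norm_add₃_le.trans (add_le_add_three ((norm_mul_le _ _).trans ?_) hsv.le le_rfl)
        rw [hsv]
    _ ≤ 3 * ‖v - 1‖ := by nlinarith [norm_nonneg (v - 1)]

/-- The unitary part `w = v (v⋆v)^(-1/2)` of `v` satisfies the same intertwining relation. -/
theorem exists_unitary_mul_eq_mul_of_norm_sub_one_le {v p e : A} (hp : IsSelfAdjoint p)
    (he : IsSelfAdjoint e) (hvp : v * p = e * v) (hv : ‖v - 1‖ ≤ 1 / 6) :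
    ∃ w ∈ unitary A, w * p = e * w ∧ ‖w - 1‖ ≤ 5 * ‖v - 1‖ := by
  set b := star v * v
  have hb : IsSelfAdjoint b := .star_mul_self v
  have hb3 : ‖b - 1‖ ≤ 3 * ‖v - 1‖ := norm_star_mul_self_sub_one_le (by linarith)
  have hb1 : ‖b - 1‖ ≤ 1 / 2 := by linarith
  set c := cfc (fun t : ℝ => (√t)⁻¹) b
  have hpc : Commute c p := by
    have hpv : p * star v = star v * e := by
      simpa [hp.star_eq, he.star_eq] using congrArg star hvp
    refine Commute.cfc_real ?_ _
    calc b * p = star v * (e * v) := by rw [mul_assoc, hvp]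
      _ = p * b := by rw [← mul_assoc, ← hpv, mul_assoc]
  have hvunit : IsUnit v := sub_sub_self 1 v ▸
    (Units.oneSub (1 - v) (by rw [norm_sub_rev]; linarith)).isUnit
  refine ⟨v * c, (hvunit.mul (isUnit_cfc_inv_sqrt hb hb1)).mem_unitary_of_star_mul_self ?_, ?_, ?_⟩
  · rw [star_mul, (cfc_predicate _ b : IsSelfAdjoint c).star_eq, mul_assoc, ← mul_assoc (star v),
      ← mul_assoc]
    exact cfc_inv_sqrt_mul_mul_self hb hb1
  · rw [mul_assoc, hpc.eq, ← mul_assoc, hvp, mul_assoc]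
  · have hc1 : ‖c - 1‖ ≤ 3 * ‖v - 1‖ := (norm_cfc_inv_sqrt_sub_one_le hb hb1).trans hb3
    calc ‖v * c - 1‖ = ‖(v - 1) * (c - 1) + (v - 1) + (c - 1)‖ := by
          congr 1; noncomm_ring
      _ ≤ ‖v - 1‖ * (3 * ‖v - 1‖) + ‖v - 1‖ + 3 * ‖v - 1‖ :=
          norm_add₃_le.trans (add_le_add_three ((norm_mul_le _ _).trans (by gcongr)) le_rfl hc1)
      _ ≤ 5 * ‖v - 1‖ := by nlinarith [norm_nonneg (v - 1)]

theorem IsStarProjection.exists_unitary_conj_eq {p e : A} (hp : IsStarProjection p)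
    (he : IsStarProjection e) (h : ‖e - p‖ ≤ 1 / 6) :
    ∃ w ∈ unitary A, w * p * star w = e ∧ ‖w - 1‖ ≤ 5 * ‖e - p‖ := by
  set v := e * p + (1 - e) * (1 - p)
  have hvp : v * p = e * v := by
    simp only [v, add_mul, mul_add, mul_assoc, hp.one_sub_mul_self, hp.isIdempotentElem.eq,
      ← mul_assoc e (1 - e), he.mul_one_sub_self, ← mul_assoc e e, he.isIdempotentElem.eq,
      mul_zero, zero_mul, add_zero]
  have hv : v - 1 = (2 * e - 1) * (p - e) := by
    have h2 : (2 * e - 1) * (p - e) = 2 * e * p - 2 * (e * e) - p + e := by noncomm_ring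
    rw [h2, he.isIdempotentElem.eq]
    simp only [v]
    noncomm_ring
  have hvn : ‖v - 1‖ = ‖e - p‖ := by
    rw [hv, CStarRing.norm_mem_unitary_mul _ he.two_mul_sub_one_mem_unitary, norm_sub_rev]
  obtain ⟨w, hw, hwp, hw1⟩ := exists_unitary_mul_eq_mul_of_norm_sub_one_le hp.isSelfAdjoint
    he.isSelfAdjoint hvp (hvn ▸ h)
  exact ⟨w, hw, by rw [hwp, mul_assoc, Unitary.mul_star_self_of_mem hw, mul_one], hvn ▸ hw1⟩

end CStarAlgebra

section OrbitAverage

variable {G : Type*} [Fintype G] {A : Type*} [CStarAlgebra A] (α : G → A ≃⋆ₐ[ℂ] A)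

def orbitAverage (a : A) : A := (Fintype.card G : ℂ)⁻¹ • ∑ g, α g a

variable {α}

theorem map_orbitAverage [Group G] (hα : ∀ g h : G, ∀ a : A, α (g * h) a = α g (α h a))
    (g : G) (a : A) : α g (orbitAverage α a) = orbitAverage α a := by
  rw [orbitAverage, map_smul, map_sum]
  congr 1
  simp_rw [← hα]
  exact Fintype.sum_equiv (Equiv.mulLeft g) _ _ fun _ => rfl

theorem IsSelfAdjoint.orbitAverage {a : A} (ha : IsSelfAdjoint a) :
    IsSelfAdjoint (orbitAverage α a) :=
  .smul (by simp [IsSelfAdjoint]) (isSelfAdjoint_sum _ fun g _ => ha.map (α g))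

theorem norm_orbitAverage_sub_le [Nonempty G] {a : A} {δ : ℝ} (h : ∀ g, ‖α g a - a‖ ≤ δ) :
    ‖orbitAverage α a - a‖ ≤ δ := by
  have hn : (Fintype.card G : ℂ) ≠ 0 := Nat.cast_ne_zero.2 Fintype.card_ne_zero
  have hsub : orbitAverage α a - a = (Fintype.card G : ℂ)⁻¹ • ∑ g, (α g a - a) := by
    rw [Finset.sum_sub_distrib, smul_sub, orbitAverage, Finset.sum_const, Finset.card_univ,
      ← Nat.cast_smul_eq_nsmul ℂ, smul_smul, inv_mul_cancel₀ hn, one_smul]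
  calc ‖orbitAverage α a - a‖ ≤ (Fintype.card G : ℝ)⁻¹ * ∑ g : G, ‖α g a - a‖ := by
        rw [hsub, norm_smul, norm_inv, Complex.norm_natCast]
        gcongr
        exact norm_sum_le _ _
    _ ≤ (Fintype.card G : ℝ)⁻¹ * ∑ _g : G, δ := by gcongr with g; exact h g
    _ = δ := by simp [field]

theorem exists_isStarProjection_invariant_near [Group G]
    (hα : ∀ g h : G, ∀ a : A, α (g * h) a = α g (α h a)) {p : A} (hp : IsStarProjection p)
    {δ : ℝ} (hδ : δ ≤ 1 / 64) (h : ∀ g, ‖α g p - p‖ ≤ δ) :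
    ∃ E : A, IsStarProjection E ∧ (∀ g, α g E = E) ∧ ‖E - p‖ ≤ 9 * δ := by
  set a := orbitAverage α p
  have ha : IsSelfAdjoint a := hp.isSelfAdjoint.orbitAverage
  have hap : ‖a - p‖ ≤ δ := norm_orbitAverage_sub_le h
  have haa : ‖a * a - a‖ ≤ 4 * δ := norm_mul_self_sub_self_le hp (by linarith) hap
  have haa' : ‖a * a - a‖ ≤ 1 / 16 := by linarith
  refine ⟨cfc projCutoff a, ha.isStarProjection_cfc_projCutoff haa', fun g => ?_, ?_⟩
  · rw [StarAlgHomClass.map_cfc (α g) projCutoff a continuous_projCutoff.continuousOn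
      (StarAlgEquiv.isometry (α g)).continuous ha (by rw [map_orbitAverage hα]; exact ha),
      map_orbitAverage hα]
  · calc ‖cfc projCutoff a - p‖ ≤ ‖cfc projCutoff a - a‖ + ‖a - p‖ :=
          norm_sub_le_norm_sub_add_norm_sub _ _ _
      _ ≤ 2 * (4 * δ) + δ :=
          add_le_add ((ha.norm_cfc_projCutoff_sub_le haa').trans (by linarith)) hap
      _ = 9 * δ := by ring

theorem exists_unitary_conj_invariant_near_one [Group G]
    (hα : ∀ g h : G, ∀ a : A, α (g * h) a = α g (α h a)) {p : A} (hp : IsStarProjection p)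
    {δ : ℝ} (hδ : δ ≤ 1 / 64) (h : ∀ g, ‖α g p - p‖ ≤ δ) :
    ∃ w ∈ unitary A, (∀ g, α g (w * p * star w) = w * p * star w) ∧ ‖w - 1‖ ≤ 45 * δ := by
  obtain ⟨E, hE, hEα, hEp⟩ := exists_isStarProjection_invariant_near hα hp hδ h
  obtain ⟨w, hw, rfl, hw1⟩ := hp.exists_unitary_conj_eq hE (by linarith)
  exact ⟨w, hw, hEα, by linarith⟩

end OrbitAverage

/-- `180 = 4 * 45`: conjugating by a unitary `w` with `‖w - 1‖ ≤ 45 n δ` moves each Rokhlin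
estimate by at most `4 ‖w - 1‖` times the norms involved. -/
theorem exists_rokhlin_tolerance {ε n M : ℝ} (hε : 0 < ε) (hn : 1 ≤ n) (hM : 1 ≤ M) :
    ∃ δ > 0, n * δ ≤ 1 / 64 ∧ δ + 180 * (n * δ) * M < ε := by
  set m := min ε 1
  have hm : 0 < m := lt_min hε one_pos
  refine ⟨m / (400 * n * M), by positivity, ?_⟩
  have hnδM : n * (m / (400 * n * M)) * M = m / 400 := by field_simp
  have hδ : m / (400 * n * M) ≤ m / 400 :=
    div_le_div_of_nonneg_left hm.le (by norm_num) (by nlinarith)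
  have hnδ : n * (m / (400 * n * M)) ≤ m / 400 :=
    hnδM ▸ le_mul_of_one_le_right (by positivity) hM
  constructor <;> nlinarith [min_le_left ε 1, min_le_right ε 1]

theorem tracialRokhlin_invariant_defect_general (A : Type*) [CStarAlgebra A]
    [PartialOrder A] [StarOrderedRing A]
    (G : Type*) [Group G] [Fintype G]
    (α : G → A ≃⋆ₐ[ℂ] A) (hα : ∀ g h : G, ∀ a : A, α (g * h) a = α g (α h a))
    (hTR : TracialRokhlin α) :
    ∀ (F : Finset A) (ε : ℝ), 0 < ε → ∀ x : A, 0 ≤ x → ‖x‖ = 1 →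
      ∃ e : G → A, (∀ g, IsProjectionElem (e g)) ∧
        (∀ g h, g ≠ h → e g * e h = 0) ∧
        (∀ g h, ‖α g (e h) - e (g * h)‖ < ε) ∧
        (∀ g, ∀ a ∈ F, ‖e g * a - a * e g‖ < ε) ∧
        (∀ g, α g (∑ h : G, e h) = ∑ h : G, e h) ∧
        MvNInHer (1 - ∑ g : G, e g) x ∧
        1 - ε < ‖(∑ g : G, e g) * x * (∑ g : G, e g)‖ := by
  intro F ε hε x hx hxn
  obtain ⟨M, hM, hFM⟩ : ∃ M : ℝ, 1 ≤ M ∧ ∀ a ∈ F, ‖a‖ ≤ M :=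
    ⟨1 + ∑ a ∈ F, ‖a‖, le_add_of_nonneg_right (by positivity), fun a ha =>
      (Finset.single_le_sum (fun b _ => norm_nonneg b) ha).trans (le_add_of_nonneg_left one_pos.le)⟩
  obtain ⟨δ, hδ, hnδ, hδε⟩ :=
    exists_rokhlin_tolerance hε (Nat.one_le_cast.2 (Fintype.card_pos (α := G))) hM
  obtain ⟨e, he, horth, hact, hcomm, hher, hexe⟩ := hTR F δ hδ x hx hxn
  have he' (g : G) : IsStarProjection (e g) := isProjectionElem_iff_isStarProjection.1 (he g)
  set p := ∑ g, e g
  have hp : IsStarProjection p := .sum (fun g _ => he' g) fun g _ h _ => horth g h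
  obtain ⟨w, hw, hinv, hw1⟩ := exists_unitary_conj_invariant_near_one hα hp hnδ
    fun g => norm_map_sum_sub_sum_le (α g) g fun k => (hact g k).le
  set φ := Unitary.conjStarAlgAut ℂ A ⟨w, hw⟩
  have hφ (q : A) (hq : IsStarProjection q) : ‖φ q - q‖ ≤ 90 * (Fintype.card G * δ) :=
    (norm_mul_mul_star_sub_le hw q).trans (by nlinarith [hq.norm_le, norm_nonneg (w - 1)])
  have hφsum : ∑ g, φ (e g) = φ p := (map_sum φ e _).symm
  have hM' := le_mul_of_one_le_right (by positivity : (0 : ℝ) ≤ Fintype.card G * δ) hM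
  refine ⟨fun g => φ (e g), fun g => isProjectionElem_iff_isStarProjection.2 ((he' g).map φ),
    fun g h hgh => by simp only [← map_mul, horth g h hgh, map_zero], fun g h => ?_,
    fun g a ha => ?_, fun g => by rw [hφsum]; exact hinv g, ?_, ?_⟩
  · refine ((α g).norm_map_sub_le_add _ (e h) _ (e (g * h))).trans_lt ?_
    linarith [hφ _ (he' h), hφ _ (he' (g * h)), hact g h]
  · refine (norm_mul_sub_mul_le_add _ (e g) a).trans_lt ?_
    nlinarith [hcomm g a ha, mul_le_mul (hφ _ (he' g)) (hFM a ha) (norm_nonneg a) (by positivity)]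
  · rw [hφsum, ← map_one φ, ← map_sub]
    exact hher.unitary_conj hw
  · have h := norm_mul_mul_sub_mul_mul_le hp.norm_le (hp.map φ).norm_le x
    rw [hxn, mul_one, norm_sub_rev _ (φ _)] at h
    simp only [hφsum]
    linarith [norm_le_norm_add_norm_sub' (p * x * p) (φ p * x * φ p), hφ p hp]

/-- For an action with the tracial Rokhlin property, the Rokhlin projections may be
chosen so that their sum is exactly invariant. -/
theorem tracialRokhlin_invariant_defect (A : Type*) [CStarAlgebra A]
    [PartialOrder A] [StarOrderedRing A] [TopologicalSpace.SeparableSpace A]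
    (hinfdim : ¬ FiniteDimensional ℂ A) (hsimple : IsSimpleCStarAlgebra A)
    (G : Type*) [Group G] [Fintype G]
    (α : G → A ≃⋆ₐ[ℂ] A) (hα : ∀ g h : G, ∀ a : A, α (g * h) a = α g (α h a))
    (hTR : TracialRokhlin α) :
    ∀ (F : Finset A) (ε : ℝ), 0 < ε → ∀ x : A, 0 ≤ x → ‖x‖ = 1 →
      ∃ e : G → A, (∀ g, IsProjectionElem (e g)) ∧
        (∀ g h, g ≠ h → e g * e h = 0) ∧
        (∀ g h, ‖α g (e h) - e (g * h)‖ < ε) ∧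
        (∀ g, ∀ a ∈ F, ‖e g * a - a * e g‖ < ε) ∧
        (∀ g, α g (∑ h : G, e h) = ∑ h : G, e h) ∧
        MvNInHer (1 - ∑ g : G, e g) x ∧
        1 - ε < ‖(∑ g : G, e g) * x * (∑ g : G, e g)‖ :=
  tracialRokhlin_invariant_defect_general A G α hα hTR
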